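/- Let α, ν be positive integers and let G be a finite simple graph with independence number α, matching number ν, and the maximum possible number of edges among all finite simple graphs with independence number α and matching number ν. Let S_G be the set of vertices v of G with ν(G \ v) = ν(G) − 1. Then the matching number of the induced subgraph on the complement of S_G equals ν − |S_G|. -/

import Mathlib

/-- The number of edges of a simple graph. -/
noncomputable def edgeCount {V : Type*} (G : SimpleGraph V) : ℕ := G.edgeSet.ncard

/-- The independence number: largest size of a set of pairwise nonadjacent vertices. -/
noncomputable def indNum {V : Type*} (G : SimpleGraph V) : ℕ :=
  sSup {n | ∃ s : Finset V, (∀ x ∈ s, ∀ y ∈ s, ¬ G.Adj x y) ∧ s.card = n}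

/-- A finite set of edges of `G` forming a matching (pairwise vertex-disjoint edges). -/
def IsMatchingFinset {V : Type*} (G : SimpleGraph V) (m : Finset (Sym2 V)) : Prop :=
  ↑m ⊆ G.edgeSet ∧ ∀ e ∈ m, ∀ f ∈ m, e ≠ f → ∀ v : V, ¬(v ∈ e ∧ v ∈ f)

/-- The matching number: largest size of a matching. -/
noncomputable def matNum {V : Type*} (G : SimpleGraph V) : ℕ :=
  sSup {n | ∃ m : Finset (Sym2 V), IsMatchingFinset G m ∧ m.card = n}

/-- The maximum degree. -/
noncomputable def maxDeg {V : Type*} (G : SimpleGraph V) : ℕ :=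
  ⨆ v, (G.neighborSet v).ncard

/-- `Gext α ν`: disjoint union of `K_{2ν+1}` with `α - 1` isolated vertices. -/
def Gext (α ν : ℕ) : SimpleGraph (Fin (2*ν+1) ⊕ Fin (α-1)) :=
  SimpleGraph.fromRel (fun x y => x.isLeft = true ∧ y.isLeft = true)

/-- `Hext α ν`: the complete split graph: clique of size `ν` joined to an
independent set of size `α`. -/
def Hext (α ν : ℕ) : SimpleGraph (Fin ν ⊕ Fin α) :=
  SimpleGraph.fromRel (fun x _ => x.isLeft = true)

/-- `Fext α Δ`: disjoint union of `α` copies of `K_{Δ+1}`. -/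
def Fext (α Δ : ℕ) : SimpleGraph (Fin α × Fin (Δ+1)) :=
  SimpleGraph.fromRel (fun x y => x.1 = y.1)

/-- `Jgraph Δ`: for even `Δ` this is `K_{Δ+1}`; for odd `Δ = 2j-1` it is `K_{2j}`
minus a perfect matching (vertices `2k, 2k+1` are nonadjacent) together with an extra
vertex (the last one) joined to all but one (vertex `0`) of the other vertices. -/
def Jgraph (Δ : ℕ) : SimpleGraph (Fin (2*((Δ+1)/2)+1)) :=
  SimpleGraph.fromRel (fun x y =>
    if Δ % 2 = 0 then True
    else (x.val < 2*((Δ+1)/2) ∧ y.val < 2*((Δ+1)/2) ∧ x.val/2 ≠ y.val/2) ∨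
         (x.val = 2*((Δ+1)/2) ∧ 0 < y.val ∧ y.val < 2*((Δ+1)/2)))

/-- `G` is edge-extremal for `(α, ν)`: it has independence number `α`, matching number `ν`,
and the maximum number of edges among all finite simple graphs with independence number `α`
and matching number `ν`. -/
def EdgeExtremal {V : Type*} [Fintype V] (G : SimpleGraph V) (α ν : ℕ) : Prop :=
  indNum G = α ∧ matNum G = ν ∧
    ∀ (W : Type) [Fintype W] (H : SimpleGraph W),
      indNum H = α → matNum H = ν → edgeCount H ≤ edgeCount G


/-!
Let `ν(A)` be the matching number of `G` restricted to `A`. In an edge-extremal graph two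
non-adjacent vertices `x, y` satisfy `ν(V - x - y) = ν`: otherwise the edge `xy` could be added
without raising `ν`, and isolated vertices could be added to restore `α`, giving more edges.
Hence every vertex of `S_G` is adjacent to all other vertices.

Deleting a vertex lowers `ν(A)` by at most one, and deleting a universal vertex lowers it by
exactly one unless a maximum matching of the rest leaves no vertex free. Removing the vertices
of `S_G` one at a time therefore gives `ν - |S_G| ≤ ν(V - S_G)`, and equality unless
`|V| ≤ 2ν + 1`. If `|V| = 2ν`, every vertex lies in `S_G`; if `|V| = 2ν + 1`, the graph is
complete and `S_G` is empty.
-/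
section

open SimpleGraph Finset

variable {V W : Type*}

namespace IsMatchingFinset

variable {G : SimpleGraph V} {m m' : Finset (Sym2 V)}

theorem mono (h : IsMatchingFinset G m) (hsub : m' ⊆ m) : IsMatchingFinset G m' :=
  ⟨(coe_subset.2 hsub).trans h.1, fun e he f hf => h.2 e (hsub he) f (hsub hf)⟩

theorem insert [DecidableEq V] (h : IsMatchingFinset G m) {a b : V} (hab : G.Adj a b)
    (ha : ∀ e ∈ m, a ∉ e) (hb : ∀ e ∈ m, b ∉ e) : IsMatchingFinset G (insert s(a, b) m) := by
  refine ⟨by rw [coe_insert]; exact Set.insert_subset hab h.1, ?_⟩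
  rintro e he f hf hef v ⟨hve, hvf⟩
  rcases mem_insert.1 he with rfl | he' <;> rcases mem_insert.1 hf with rfl | hf'
  · exact hef rfl
  · rcases Sym2.mem_iff.1 hve with rfl | rfl
    exacts [ha f hf' hvf, hb f hf' hvf]
  · rcases Sym2.mem_iff.1 hvf with rfl | rfl
    exacts [ha e he' hve, hb e he' hve]
  · exact h.2 e he' f hf' hef v ⟨hve, hvf⟩

theorem card_biUnion_toFinset [DecidableEq V] (h : IsMatchingFinset G m) :
    #(m.biUnion Sym2.toFinset) = 2 * #m := by
  rw [card_biUnion fun e he f hf hef => disjoint_left.2 fun v hve hvf =>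
    h.2 e he f hf hef v ⟨Sym2.mem_toFinset.1 hve, Sym2.mem_toFinset.1 hvf⟩,
    sum_congr rfl fun e he =>
      Sym2.card_toFinset_of_not_isDiag e (G.not_isDiag_of_mem_edgeSet (h.1 he)),
    sum_const, smul_eq_mul, mul_comm]

theorem image [DecidableEq W] {H : SimpleGraph W} {A : Set V} (h : IsMatchingFinset G m)
    (hA : ↑m ⊆ A.sym2) {ψ : V → W} (hψ : Set.InjOn ψ A)
    (hadj : ∀ a ∈ A, ∀ b ∈ A, G.Adj a b → H.Adj (ψ a) (ψ b)) :
    IsMatchingFinset H (m.image (Sym2.map ψ)) ∧ #(m.image (Sym2.map ψ)) = #m := by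
  have hmemA : ∀ e ∈ m, ∀ v ∈ e, v ∈ A := fun e he v hv => Set.mem_sym2_iff_subset.1 (hA he) hv
  refine ⟨⟨?_, ?_⟩, card_image_of_injOn ?_⟩
  · intro _ he'
    obtain ⟨e, he, rfl⟩ := mem_image.1 (mem_coe.1 he')
    induction e using Sym2.ind with | _ a b =>
    exact hadj a (hmemA _ he a (Sym2.mem_mk_left a b)) b (hmemA _ he b (Sym2.mem_mk_right a b))
      (h.1 he)
  · simp only [mem_image]
    rintro _ ⟨e, he, rfl⟩ _ ⟨f, hf, rfl⟩ hef w ⟨hwe, hwf⟩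
    obtain ⟨a, ha, rfl⟩ := Sym2.mem_map.1 hwe
    obtain ⟨b, hb, hab⟩ := Sym2.mem_map.1 hwf
    obtain rfl := hψ (hmemA f hf b hb) (hmemA e he a ha) hab
    exact h.2 e he f hf (by rintro rfl; exact hef rfl) b ⟨ha, hb⟩
  · intro e he f hf hef
    induction e using Sym2.ind with | _ a b =>
    induction f using Sym2.ind with | _ c d =>
    have hA' : ∀ {x y}, s(x, y) ∈ m → x ∈ A ∧ y ∈ A := fun hxy =>
      ⟨hmemA _ hxy _ (Sym2.mem_mk_left _ _), hmemA _ hxy _ (Sym2.mem_mk_right _ _)⟩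
    obtain ⟨ha, hb⟩ := hA' he
    obtain ⟨hc, hd⟩ := hA' hf
    rw [Sym2.map_mk, Sym2.map_mk, Sym2.eq_iff] at hef
    rw [Sym2.eq_iff]
    rcases hef with ⟨h1, h2⟩ | ⟨h1, h2⟩
    exacts [.inl ⟨hψ ha hc h1, hψ hb hd h2⟩, .inr ⟨hψ ha hd h1, hψ hb hc h2⟩]

end IsMatchingFinset

section Matching

variable (G : SimpleGraph V) {m : Finset (Sym2 V)}

theorem bddAbove_matNum_set [Finite V] :
    BddAbove {n | ∃ m : Finset (Sym2 V), IsMatchingFinset G m ∧ #m = n} :=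
  ⟨Nat.card (Sym2 V), by
    rintro _ ⟨m, -, rfl⟩
    exact (Set.ncard_coe_finset m).symm.le.trans (Set.ncard_le_card _)⟩

theorem exists_isMatchingFinset_card_eq_matNum [Finite V] :
    ∃ m : Finset (Sym2 V), IsMatchingFinset G m ∧ #m = matNum G := by
  refine Nat.sSup_mem ?_ (bddAbove_matNum_set G)
  exact ⟨0, ∅, ⟨by simp, by simp⟩, rfl⟩

variable {G}

theorem IsMatchingFinset.card_le_matNum [Finite V] (h : IsMatchingFinset G m) : #m ≤ matNum G :=
  le_csSup (bddAbove_matNum_set G) ⟨m, h, rfl⟩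

theorem IsMatchingFinset.card_le_matNum_of_injOn [Finite W] {H : SimpleGraph W} {A : Set V}
    (h : IsMatchingFinset G m) (hA : ↑m ⊆ A.sym2) {ψ : V → W} (hψ : Set.InjOn ψ A)
    (hadj : ∀ a ∈ A, ∀ b ∈ A, G.Adj a b → H.Adj (ψ a) (ψ b)) : #m ≤ matNum H := by
  classical
  obtain ⟨hm, hcard⟩ := h.image hA hψ hadj
  exact hcard ▸ hm.card_le_matNum

theorem IsMatchingFinset.card_le_matNum_induce [Finite V] {A : Set V} (h : IsMatchingFinset G m)
    (hA : ↑m ⊆ A.sym2) : #m ≤ matNum (G.induce A) := by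
  rcases m.eq_empty_or_nonempty with rfl | ⟨e, he⟩
  · exact Nat.zero_le _
  have : Nonempty A := by
    induction e using Sym2.ind with | _ a b => exact ⟨a, (Set.mk_mem_sym2_iff.1 (hA he)).1⟩
  have hψ : ∀ v ∈ A, ↑(Function.invFun (Subtype.val : A → V) v) = v :=
    fun v hv => Function.invFun_eq ⟨⟨v, hv⟩, rfl⟩
  refine h.card_le_matNum_of_injOn hA (ψ := Function.invFun Subtype.val)
    (fun a ha b hb hab => by rw [← hψ a ha, ← hψ b hb, hab]) fun a ha b hb hadj => ?_
  simpa [hψ a ha, hψ b hb] using hadj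

variable (G)

theorem matNum_mono [Finite V] {H : SimpleGraph V} (hGH : G ≤ H) : matNum G ≤ matNum H := by
  obtain ⟨m, hm, hcard⟩ := exists_isMatchingFinset_card_eq_matNum G
  exact hcard ▸ IsMatchingFinset.card_le_matNum ⟨hm.1.trans (edgeSet_mono hGH), hm.2⟩

theorem exists_isMatchingFinset_induce [Finite V] (A : Set V) :
    ∃ m : Finset (Sym2 V), IsMatchingFinset G m ∧ ↑m ⊆ A.sym2 ∧ #m = matNum (G.induce A) := by
  classical
  obtain ⟨m, hm, hcard⟩ := exists_isMatchingFinset_card_eq_matNum (G.induce A)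
  obtain ⟨hm', hcard'⟩ := hm.image (A := Set.univ) (H := G) (by simp)
    Subtype.val_injective.injOn fun _ _ _ _ hadj => hadj
  refine ⟨_, hm', fun _ he' => ?_, hcard'.trans hcard⟩
  obtain ⟨e, -, rfl⟩ := mem_image.1 (mem_coe.1 he')
  induction e using Sym2.ind with | _ a b => simp

theorem matNum_induce_mono [Finite V] {A B : Set V} (hAB : A ⊆ B) :
    matNum (G.induce A) ≤ matNum (G.induce B) := by
  obtain ⟨m, hm, hA, hcard⟩ := exists_isMatchingFinset_induce G A
  exact hcard ▸ hm.card_le_matNum_induce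
    (hA.trans fun _ he => Set.mem_sym2_iff_subset.2 ((Set.mem_sym2_iff_subset.1 he).trans hAB))

theorem matNum_induce_univ [Finite V] : matNum (G.induce Set.univ) = matNum G := by
  obtain ⟨m, hm, -, hcard⟩ := exists_isMatchingFinset_induce G Set.univ
  obtain ⟨m', hm', hcard'⟩ := exists_isMatchingFinset_card_eq_matNum G
  exact le_antisymm (hcard ▸ hm.card_le_matNum) (hcard' ▸ hm'.card_le_matNum_induce (by simp))

theorem matNum_induce_le [Finite V] (A : Set V) : matNum (G.induce A) ≤ matNum G :=
  matNum_induce_univ G ▸ matNum_induce_mono G (Set.subset_univ A)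

theorem two_mul_matNum_induce_le_ncard [Finite V] (A : Set V) :
    2 * matNum (G.induce A) ≤ A.ncard := by
  classical
  obtain ⟨m, hm, hA, hcard⟩ := exists_isMatchingFinset_induce G A
  rw [← hcard, ← hm.card_biUnion_toFinset, ← Set.ncard_coe_finset]
  refine Set.ncard_le_ncard fun v hv => ?_
  obtain ⟨e, he, hve⟩ := mem_biUnion.1 hv
  exact Set.mem_sym2_iff_subset.1 (hA he) (Sym2.mem_toFinset.1 hve)

end Matching

section Deletion

variable [Finite V] (G : SimpleGraph V)

theorem matNum_induce_le_diff_singleton_add_one (A : Set V) (s : V) :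
    matNum (G.induce A) ≤ matNum (G.induce (A \ {s})) + 1 := by
  classical
  obtain ⟨m, hm, hA, hcard⟩ := exists_isMatchingFinset_induce G A
  have hcover : #(m.filter (s ∈ ·)) ≤ 1 := card_le_one.2 fun e he f hf => by
    by_contra hef
    exact hm.2 e (mem_filter.1 he).1 f (mem_filter.1 hf).1 hef s
      ⟨(mem_filter.1 he).2, (mem_filter.1 hf).2⟩
  have hrest : #(m.filter (s ∉ ·)) ≤ matNum (G.induce (A \ {s})) :=
    (hm.mono (filter_subset _ _)).card_le_matNum_induce fun e he =>
      Set.mem_sym2_iff_subset.2 fun v hv =>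
        ⟨Set.mem_sym2_iff_subset.1 (hA (mem_filter.1 he).1) hv,
          fun hvs => (mem_filter.1 he).2 (hvs ▸ hv)⟩
  have := card_filter_add_card_filter_not (s := m) (s ∈ ·)
  omega

/-- Matching a universal vertex `s` to a vertex left free by a maximum matching of `A \ {s}`
raises the matching number, unless no vertex is left free. -/
theorem add_one_le_matNum_induce_or_ncard_le {A : Set V} {s : V} (hs : s ∈ A)
    (hadj : ∀ v, v ≠ s → G.Adj s v) :
    matNum (G.induce (A \ {s})) + 1 ≤ matNum (G.induce A) ∨
      A.ncard ≤ 2 * matNum (G.induce A) + 1 := by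
  classical
  obtain ⟨m, hm, hA, hcard⟩ := exists_isMatchingFinset_induce G (A \ {s})
  have hmemA : ∀ e ∈ m, ∀ v ∈ e, v ∈ A \ {s} :=
    fun e he v hv => Set.mem_sym2_iff_subset.1 (hA he) hv
  by_cases hfree : ∃ u ∈ A \ {s}, ∀ e ∈ m, u ∉ e
  · obtain ⟨u, hu, hfree⟩ := hfree
    have hsm : ∀ e ∈ m, s ∉ e := fun e he hse => (hmemA e he s hse).2 rfl
    have hnotmem : s(s, u) ∉ m := fun h => hsm _ h (Sym2.mem_mk_left s u)
    refine .inl (hcard ▸ card_insert_of_notMem hnotmem ▸ ?_)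
    refine (hm.insert (hadj u hu.2) hsm hfree).card_le_matNum_induce ?_
    rw [coe_insert]
    exact Set.insert_subset (Set.mk_mem_sym2_iff.2 ⟨hs, hu.1⟩) fun e he =>
      Set.mem_sym2_iff_subset.2 fun v hv => (hmemA e he v hv).1
  · push Not at hfree
    have hcover : A \ {s} ⊆ ↑(m.biUnion Sym2.toFinset) := fun u hu => by
      obtain ⟨e, he, hue⟩ := hfree u hu
      exact mem_biUnion.2 ⟨e, he, Sym2.mem_toFinset.2 hue⟩
    have h1 := Set.ncard_le_ncard hcover
    rw [Set.ncard_coe_finset, hm.card_biUnion_toFinset, hcard] at h1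
    have h2 := Set.ncard_sdiff_singleton_add_one hs
    have h3 := matNum_induce_mono G (Set.sdiff_subset : A \ {s} ⊆ A)
    right
    omega

theorem matNum_induce_compl_singleton_eq_sub_one_iff (hG : 0 < matNum G) (v : V) :
    matNum (G.induce {v}ᶜ) = matNum G - 1 ↔ matNum (G.induce {v}ᶜ) < matNum G := by
  have := matNum_induce_le_diff_singleton_add_one G Set.univ v
  rw [matNum_induce_univ, ← Set.compl_eq_univ_sdiff] at this
  have := matNum_induce_le G {v}ᶜ
  omega

theorem matNum_induce_union_le (B : Set V) (T : Finset V) :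
    matNum (G.induce (B ∪ ↑T)) ≤ matNum (G.induce B) + #T := by
  classical
  induction T using Finset.induction_on with
  | empty => rw [coe_empty, Set.union_empty]; simp
  | insert s T hs ih =>
    have h1 := matNum_induce_le_diff_singleton_add_one G (B ∪ ↑(insert s T)) s
    have h2 := matNum_induce_mono G (show (B ∪ ↑(insert s T)) \ {s} ⊆ B ∪ ↑T by
      rw [Set.sdiff_singleton_subset_iff, coe_insert, Set.union_insert])
    rw [card_insert_of_notMem hs]
    omega

theorem matNum_induce_add_card_le_or (B : Set V) (T : Finset V)
    (hT : ∀ s ∈ T, ∀ v, v ≠ s → G.Adj s v) (hBT : Disjoint B ↑T) :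
    matNum (G.induce B) + #T ≤ matNum (G.induce (B ∪ ↑T)) ∨
      (B ∪ ↑T).ncard ≤ 2 * matNum (G.induce (B ∪ ↑T)) + 1 := by
  classical
  induction T using Finset.induction_on with
  | empty => rw [coe_empty, Set.union_empty]; simp
  | insert s T hs ih =>
    have hsB : s ∉ B := fun h => Set.disjoint_left.1 hBT h (by simp)
    have hsBT : s ∉ B ∪ ↑T := by simp [hs, hsB]
    have hdiff : (B ∪ ↑(insert s T)) \ {s} = B ∪ ↑T := by
      rw [coe_insert, Set.union_insert, Set.insert_sdiff_self_of_notMem hsBT]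
    have hncard : (B ∪ ↑(insert s T)).ncard = (B ∪ ↑T).ncard + 1 := by
      rw [coe_insert, Set.union_insert, Set.ncard_insert_of_notMem hsBT]
    have hstep := add_one_le_matNum_induce_or_ncard_le G (A := B ∪ ↑(insert s T)) (by simp)
      (hT s (mem_insert_self s T))
    rw [hdiff] at hstep
    have ih := ih (fun t ht => hT t (mem_insert_of_mem ht)) (hBT.mono_right (by simp))
    rw [card_insert_of_notMem hs]
    omega

theorem ncard_le_two_mul_matNum_top_induce_add_one (A : Set V) :
    A.ncard ≤ 2 * matNum ((⊤ : SimpleGraph V).induce A) + 1 := by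
  have hA := Set.toFinite A
  have h := matNum_induce_add_card_le_or ⊤ ∅ hA.toFinset
    (fun _ _ _ hv => (top_adj _ _).2 hv.symm) (by simp)
  rw [Set.empty_union, Set.Finite.coe_toFinset, ← Set.ncard_eq_toFinset_card A hA] at h
  have := two_mul_matNum_induce_le_ncard ⊤ A
  omega

theorem matNum_le_matNum_induce_compl_add_ncard (S : Set V) :
    matNum G ≤ matNum (G.induce Sᶜ) + S.ncard := by
  have hS := Set.toFinite S
  have h := matNum_induce_union_le G Sᶜ hS.toFinset
  rwa [hS.coe_toFinset, Set.compl_union_self, matNum_induce_univ,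
    ← Set.ncard_eq_toFinset_card S hS] at h

theorem matNum_induce_compl_add_ncard_le_or {S : Set V} (hS : ∀ s ∈ S, ∀ v, v ≠ s → G.Adj s v) :
    matNum (G.induce Sᶜ) + S.ncard ≤ matNum G ∨ Nat.card V ≤ 2 * matNum G + 1 := by
  have hSf := Set.toFinite S
  have h := matNum_induce_add_card_le_or G Sᶜ hSf.toFinset
    (fun s hs => hS s (hSf.mem_toFinset.1 hs)) (by rw [hSf.coe_toFinset]; exact disjoint_compl_left)
  rwa [hSf.coe_toFinset, Set.compl_union_self, matNum_induce_univ, Set.ncard_univ,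
    ← Set.ncard_eq_toFinset_card S hSf] at h

theorem matNum_induce_compl_singleton_lt_of_card_eq (hcard : Nat.card V = 2 * matNum G) (v : V) :
    matNum (G.induce {v}ᶜ) < matNum G := by
  have h := two_mul_matNum_induce_le_ncard G {v}ᶜ
  have hv := Set.ncard_le_card ({v} : Set V)
  rw [Set.ncard_compl, Set.ncard_singleton] at h
  rw [Set.ncard_singleton] at hv
  omega

theorem le_matNum_top_induce_compl_singleton {k : ℕ} (hcard : Nat.card V = 2 * k + 1) (v : V) :
    k ≤ matNum ((⊤ : SimpleGraph V).induce {v}ᶜ) := by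
  have h := ncard_le_two_mul_matNum_top_induce_add_one ({v}ᶜ : Set V)
  rw [Set.ncard_compl, Set.ncard_singleton] at h
  omega

end Deletion

section Independence

variable (G : SimpleGraph V) {s : Finset V}

theorem bddAbove_indNum_set [Finite V] :
    BddAbove {n | ∃ s : Finset V, (∀ x ∈ s, ∀ y ∈ s, ¬ G.Adj x y) ∧ #s = n} :=
  ⟨Nat.card V, by
    rintro _ ⟨s, -, rfl⟩
    exact (Set.ncard_coe_finset s).symm.le.trans (Set.ncard_le_card _)⟩

theorem exists_indep_card_eq_indNum [Finite V] :
    ∃ s : Finset V, (∀ x ∈ s, ∀ y ∈ s, ¬ G.Adj x y) ∧ #s = indNum G := by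
  refine Nat.sSup_mem ?_ (bddAbove_indNum_set G)
  exact ⟨0, ∅, by simp, rfl⟩

variable {G}

theorem card_le_indNum [Finite V] (hs : ∀ x ∈ s, ∀ y ∈ s, ¬ G.Adj x y) : #s ≤ indNum G :=
  le_csSup (bddAbove_indNum_set G) ⟨s, hs, rfl⟩

theorem indNum_anti [Finite V] {H : SimpleGraph V} (hGH : G ≤ H) : indNum H ≤ indNum G := by
  obtain ⟨s, hs, hcard⟩ := exists_indep_card_eq_indNum H
  exact hcard ▸ card_le_indNum fun x hx y hy hxy => hs x hx y hy (hGH hxy)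

end Independence

section Map

variable (G : SimpleGraph V) (f : V ↪ W)

theorem edgeCount_map : edgeCount (G.map f) = edgeCount G := by
  rw [edgeCount, edgeCount, edgeSet_map, Set.ncard_image_of_injective _ f.sym2Map.injective]

theorem matNum_map [Finite V] [Finite W] : matNum (G.map f) = matNum G := by
  classical
  refine le_antisymm ?_ ?_
  · obtain ⟨m, hm, hcard⟩ := exists_isMatchingFinset_card_eq_matNum (G.map f)
    rcases m.eq_empty_or_nonempty with rfl | ⟨e, he⟩
    · exact hcard ▸ Nat.zero_le _
    have : Nonempty V := by
      induction e using Sym2.ind with | _ a b =>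
      obtain ⟨a, -⟩ := (map_adj _ _ _ _).1 (hm.1 he)
      exact ⟨a⟩
    have hinv := Function.leftInverse_invFun f.injective
    refine hcard ▸ hm.card_le_matNum_of_injOn (A := Set.range f) (ψ := Function.invFun f)
      (fun e he => ?_) ?_ ?_
    · induction e using Sym2.ind with | _ a b =>
      obtain ⟨a, b, -, rfl, rfl⟩ := (map_adj _ _ _ _).1 (hm.1 he)
      simp
    · rintro _ ⟨a, rfl⟩ _ ⟨b, rfl⟩ hab
      rw [hinv a, hinv b] at hab
      rw [hab]
    · rintro _ ⟨a, rfl⟩ _ ⟨b, rfl⟩ hab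
      rw [hinv a, hinv b]
      exact map_adj_apply.1 hab
  · obtain ⟨m, hm, hcard⟩ := exists_isMatchingFinset_card_eq_matNum G
    exact hcard ▸ hm.card_le_matNum_of_injOn (A := Set.univ) (by simp) f.injective.injOn
      fun a _ b _ hab => map_adj_apply.2 hab

theorem indNum_map [Finite V] [Finite W] :
    indNum (G.map f) = indNum G + (Nat.card W - Nat.card V) := by
  classical
  have := Fintype.ofFinite V
  have := Fintype.ofFinite W
  set R := univ.map f
  have hR : #Rᶜ = Nat.card W - Nat.card V := by
    rw [card_compl, card_map, card_univ, Nat.card_eq_fintype_card, Nat.card_eq_fintype_card]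
  refine le_antisymm ?_ ?_
  · obtain ⟨t, ht, hcard⟩ := exists_indep_card_eq_indNum (G.map f)
    have hin : #(t.filter (· ∈ Set.range f)) ≤ indNum G := by
      rw [← image_preimage f t f.injective.injOn, card_image_of_injective _ f.injective]
      exact card_le_indNum fun x hx y hy hxy =>
        ht _ (mem_preimage.1 hx) _ (mem_preimage.1 hy) (map_adj_apply.2 hxy)
    have hout : #(t.filter (· ∉ Set.range f)) ≤ #Rᶜ :=
      card_le_card fun w hw => mem_compl.2 fun hwR =>
        (mem_filter.1 hw).2 (by simpa [R] using hwR)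
    have := card_filter_add_card_filter_not (s := t) (· ∈ Set.range f)
    omega
  · obtain ⟨s, hs, hcard⟩ := exists_indep_card_eq_indNum G
    have hdisj : Disjoint (s.map f) Rᶜ :=
      disjoint_compl_right.mono_left (map_subset_map.2 (subset_univ s))
    calc indNum G + (Nat.card W - Nat.card V) = #(s.map f ∪ Rᶜ) := by
          rw [card_union_of_disjoint hdisj, card_map, hR, hcard]
      _ ≤ indNum (G.map f) := card_le_indNum fun x hx y hy hxy => by
          obtain ⟨a, b, hab, rfl, rfl⟩ := (map_adj _ _ _ _).1 hxy
          have hR' : ∀ c, f c ∉ Rᶜ := fun c => by simp [R]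
          obtain ⟨a', ha', haa⟩ := mem_map.1 ((mem_union.1 hx).resolve_right (hR' a))
          obtain ⟨b', hb', hbb⟩ := mem_map.1 ((mem_union.1 hy).resolve_right (hR' b))
          obtain rfl := f.injective haa
          obtain rfl := f.injective hbb
          exact hs _ ha' _ hb' hab

end Map

section AddEdge

variable (G : SimpleGraph V) {x y : V}

theorem edgeCount_sup_edge [Finite V] (hxy : x ≠ y) (hnadj : ¬ G.Adj x y) :
    edgeCount (G ⊔ edge x y) = edgeCount G + 1 := by
  rw [edgeCount, edgeCount, edgeSet_sup, edgeSet_edge_of_ne hxy, Set.union_singleton,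
    Set.ncard_insert_of_notMem (by rwa [mem_edgeSet])]

/-- A maximum matching of `G ⊔ edge x y` that uses the new edge restricts to a matching of
`G - x - y`. -/
theorem matNum_sup_edge_of_lt [Finite V] (h : matNum (G.induce {x, y}ᶜ) < matNum G) :
    matNum (G ⊔ edge x y) = matNum G := by
  classical
  refine le_antisymm ?_ (matNum_mono G le_sup_left)
  obtain ⟨m, hm, hcard⟩ := exists_isMatchingFinset_card_eq_matNum (G ⊔ edge x y)
  have hG : IsMatchingFinset G (m.erase s(x, y)) := by
    refine ⟨fun e he => ?_, fun e he f hf => hm.2 e (mem_of_mem_erase he) f (mem_of_mem_erase hf)⟩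
    obtain ⟨hne, he⟩ := mem_erase.1 he
    rcases (edgeSet_sup _ _ ▸ hm.1 he : e ∈ G.edgeSet ∪ (edge x y).edgeSet) with he | he
    exacts [he, absurd (edgeSet_edge_subset he) hne]
  by_cases hxy : s(x, y) ∈ m
  · have hsupp : ↑(m.erase s(x, y)) ⊆ ({x, y}ᶜ : Set V).sym2 := fun e he =>
      Set.mem_sym2_iff_subset.2 fun v hv hvxy => by
        obtain ⟨hne, he⟩ := mem_erase.1 he
        refine hm.2 e he _ hxy hne v ⟨hv, ?_⟩
        rcases hvxy with rfl | rfl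
        exacts [Sym2.mem_mk_left _ _, Sym2.mem_mk_right _ _]
    have := hG.card_le_matNum_induce hsupp
    rw [card_erase_of_mem hxy] at this
    omega
  · rw [erase_eq_of_notMem hxy] at hG
    exact hcard ▸ hG.card_le_matNum

end AddEdge

namespace EdgeExtremal

variable [Fintype V] {G : SimpleGraph V} {α ν : ℕ}

/-- Padding with isolated vertices lets any graph on `V` compete with `G`. -/
theorem edgeCount_le (hG : EdgeExtremal G α ν) {H : SimpleGraph V} (hα : indNum H ≤ α)
    (hν : matNum H = ν) : edgeCount H ≤ edgeCount G := by
  let f : V ↪ Fin (Nat.card V + (α - indNum H)) :=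
    (Finite.equivFin V).toEmbedding.trans (Fin.castLEEmb (Nat.le_add_right _ _))
  have := hG.2.2 _ (H.map f) (by rw [indNum_map, Nat.card_fin]; omega)
    (by rw [matNum_map, hν])
  rwa [edgeCount_map] at this

theorem matNum_induce_compl_pair (hG : EdgeExtremal G α ν) {x y : V} (hxy : x ≠ y)
    (hnadj : ¬ G.Adj x y) : matNum (G.induce {x, y}ᶜ) = matNum G := by
  refine le_antisymm (matNum_induce_le G _) (not_lt.1 fun hlt => ?_)
  have := hG.edgeCount_le ((indNum_anti le_sup_left).trans hG.1.le)
    ((matNum_sup_edge_of_lt G hlt).trans hG.2.1)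
  rw [edgeCount_sup_edge G hxy hnadj] at this
  omega

theorem adj_of_matNum_induce_compl_lt (hG : EdgeExtremal G α ν) {v w : V}
    (hv : matNum (G.induce {v}ᶜ) < matNum G) (hw : w ≠ v) : G.Adj v w := by
  by_contra hnadj
  have := matNum_induce_mono G
    (Set.compl_subset_compl.2 (by simp) : ({v, w}ᶜ : Set V) ⊆ {v}ᶜ)
  rw [hG.matNum_induce_compl_pair hw.symm hnadj] at this
  omega

theorem eq_top_of_card_eq (hG : EdgeExtremal G α ν) (hcard : Nat.card V = 2 * ν + 1) :
    G = ⊤ := by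
  ext x y
  refine ⟨G.ne_of_adj, fun hxy => ?_⟩
  by_contra hnadj
  have h := two_mul_matNum_induce_le_ncard G {x, y}ᶜ
  have hpair := Set.ncard_le_card ({x, y} : Set V)
  rw [hG.matNum_induce_compl_pair hxy hnadj, hG.2.1, Set.ncard_compl, Set.ncard_pair hxy] at h
  rw [Set.ncard_pair hxy] at hpair
  omega

end EdgeExtremal

end

theorem extremal_matNum_of_delete_essential_general (α ν : ℕ) (hν : 0 < ν)
    {V : Type*} [Fintype V] (G : SimpleGraph V)
    (hext : EdgeExtremal G α ν)
    (S : Set V) (hS : S = {v : V | matNum (G.induce {u | u ≠ v}) = matNum G - 1}) :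
    matNum (G.induce Sᶜ) = ν - S.ncard := by
  obtain rfl : matNum G = ν := hext.2.1
  have hS : ∀ v, v ∈ S ↔ matNum (G.induce {v}ᶜ) < matNum G := fun v =>
    hS ▸ matNum_induce_compl_singleton_eq_sub_one_iff G hν v
  have hupper := matNum_le_matNum_induce_compl_add_ncard G S
  rcases matNum_induce_compl_add_ncard_le_or G fun s hs v hv =>
      hext.adj_of_matNum_induce_compl_lt ((hS s).1 hs) hv with hlower | hsmall
  · omega
  have hlarge := two_mul_matNum_induce_le_ncard G Set.univ
  rw [matNum_induce_univ, Set.ncard_univ] at hlarge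
  obtain hcard | hcard : Nat.card V = 2 * matNum G ∨ Nat.card V = 2 * matNum G + 1 := by omega
  · have hSuniv : S = Set.univ := Set.eq_univ_of_forall fun v =>
      (hS v).2 (matNum_induce_compl_singleton_lt_of_card_eq G hcard v)
    have hempty := two_mul_matNum_induce_le_ncard G ∅
    rw [Set.ncard_empty] at hempty
    rw [hSuniv, Set.compl_univ, Set.ncard_univ]
    omega
  · have hSempty : S = ∅ := Set.eq_empty_of_forall_notMem fun v hv => by
      have := le_matNum_top_induce_compl_singleton hcard v
      rw [← hext.eq_top_of_card_eq hcard] at this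
      exact ((hS v).1 hv).not_ge this
    rw [hSempty, Set.compl_empty, matNum_induce_univ, Set.ncard_empty, Nat.sub_zero]

/-- If `G` is edge-extremal for `(α, ν)` and `S_G` is the set of vertices
covered by every maximum matching, then `ν(G \ S_G) = ν - |S_G|`. -/
theorem extremal_matNum_of_delete_essential (α ν : ℕ) (hα : 0 < α) (hν : 0 < ν)
    {V : Type*} [Fintype V] (G : SimpleGraph V)
    (hext : EdgeExtremal G α ν)
    (S : Set V) (hS : S = {v : V | matNum (G.induce {u | u ≠ v}) = matNum G - 1}) :
    matNum (G.induce Sᶜ) = ν - S.ncard :=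
  extremal_matNum_of_delete_essential_general α ν hν G hext S hS
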